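/- arXiv:2303.08500 — 2 statements merged into one kernel-verified Lean document; each statement's English description precedes it below -/
import Mathlib

section
/- Let h : R^d × ℕ → R^d satisfy ‖h(x,t) − h(y,t)‖ ≤ λ_t‖x − y‖ for all x, y with λ_t ∈ [0,1), let σ : R^d × ℕ → R satisfy σ(x,t)²·d ≤ C_t, and let ε_t, ε_t' ~ N(0, I_d) be independent of the current states. If x_{t−1} = h(x_t, t) + σ(x_t, t)·ε_t and x̄_{t−1} = h(x̄_t, t) + σ(x̄_t, t)·ε_t', then E[‖x_{t−1} − x̄_{t−1}‖²] ≤ λ_t²·E[‖x_t − x̄_t‖²] + 2C_t. -/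
/-!
Write `x_{t-1} - x̄_{t-1} = A - N` with `A = h(x_t, t) - h(x̄_t, t)` and
`N = σ(x̄_t, t) ε_t' - σ(x_t, t) ε_t`. Since the noise is centred and independent of the states,
`A` and `N` are orthogonal in `L²`; since `ε_t` and `ε_t'` are independent, so are the two terms
of `N`. Hence `E‖x_{t-1} - x̄_{t-1}‖² = E‖A‖² + d (E σ(x_t, t)² + E σ(x̄_t, t)²)`, and the
contraction bound on `A` and `σ² d ≤ C` give the claim.
-/

open MeasureTheory ProbabilityTheory
open scoped NNReal ENNReal RealInnerProductSpace

section

variable {Ω : Type*} [MeasurableSpace Ω] {P : Measure Ω}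

section Normed

variable {E F : Type*} [NormedAddCommGroup E] [NormedAddCommGroup F]

theorem integral_norm_sq_le_of_norm_le_mul {f : Ω → E} {g : Ω → F} {c : ℝ} (hg : MemLp g 2 P)
    (hfg : ∀ ω, ‖f ω‖ ≤ c * ‖g ω‖) :
    ∫ ω, ‖f ω‖ ^ 2 ∂P ≤ c ^ 2 * ∫ ω, ‖g ω‖ ^ 2 ∂P := by
  rw [← integral_const_mul]
  refine integral_mono_of_nonneg (ae_of_all _ fun ω => by positivity)
    (((memLp_two_iff_integrable_sq_norm hg.1).1 hg).const_mul _) (ae_of_all _ fun ω => ?_)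
  dsimp only
  rw [← mul_pow]
  exact pow_le_pow_left₀ (norm_nonneg _) (hfg ω) 2

theorem MeasureTheory.MemLp.smul_of_abs_le [NormedSpace ℝ E] {X : Ω → E} {s : Ω → ℝ} {K : ℝ}
    {p : ℝ≥0∞} (hX : MemLp X p P) (hs : AEStronglyMeasurable s P) (hsK : ∀ ω, |s ω| ≤ K) :
    MemLp (fun ω => s ω • X ω) p P :=
  hX.smul (memLp_top_of_bound hs K (ae_of_all _ hsK))

end Normed

section InnerProductSpace

variable {E : Type*} [NormedAddCommGroup E] [InnerProductSpace ℝ E] {X Y : Ω → E}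

theorem MeasureTheory.MemLp.integrable_inner (hX : MemLp X 2 P) (hY : MemLp Y 2 P) :
    Integrable (fun ω => ⟪X ω, Y ω⟫) P := by
  refine (L2.integrable_inner (𝕜 := ℝ) hX.toLp hY.toLp).congr ?_
  filter_upwards [hX.coeFn_toLp, hY.coeFn_toLp] with ω hXω hYω
  rw [hXω, hYω]

theorem integral_norm_sub_sq_of_integral_inner_eq_zero (hX : MemLp X 2 P) (hY : MemLp Y 2 P)
    (hXY : ∫ ω, ⟪X ω, Y ω⟫ ∂P = 0) :
    ∫ ω, ‖X ω - Y ω‖ ^ 2 ∂P = ∫ ω, ‖X ω‖ ^ 2 ∂P + ∫ ω, ‖Y ω‖ ^ 2 ∂P := by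
  have hX2 := (memLp_two_iff_integrable_sq_norm hX.1).1 hX
  have hY2 := (memLp_two_iff_integrable_sq_norm hY.1).1 hY
  have hXY2 := (hX.integrable_inner hY).const_mul 2
  simp_rw [norm_sub_sq_real]
  rw [integral_add (f := fun ω => ‖X ω‖ ^ 2 - 2 * ⟪X ω, Y ω⟫) (hX2.sub hXY2) hY2,
    integral_sub hX2 hXY2, integral_const_mul, hXY, mul_zero, sub_zero]

theorem ProbabilityTheory.IndepFun.integral_norm_smul_sq [MeasurableSpace E] [BorelSpace E]
    {s : Ω → ℝ} (hsX : IndepFun s X P) (hs : AEStronglyMeasurable s P)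
    (hX : AEStronglyMeasurable X P) :
    ∫ ω, ‖s ω • X ω‖ ^ 2 ∂P = (∫ ω, s ω ^ 2 ∂P) * ∫ ω, ‖X ω‖ ^ 2 ∂P := by
  simp_rw [norm_smul, mul_pow, Real.norm_eq_abs, sq_abs]
  have hsX2 : IndepFun (fun ω => s ω ^ 2) (fun ω => ‖X ω‖ ^ 2) P :=
    hsX.comp (measurable_id.pow_const 2) (measurable_norm.pow_const 2)
  exact hsX2.integral_mul_eq_mul_integral (hs.pow 2) (hX.norm.pow 2)

theorem ProbabilityTheory.IndepFun.integral_inner_eq_zero [CompleteSpace E] [MeasurableSpace E]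
    [BorelSpace E] (hXY : IndepFun X Y P) (hX : Integrable X P) (hY : Integrable Y P)
    (hY0 : ∫ ω, Y ω ∂P = 0) :
    ∫ ω, ⟪X ω, Y ω⟫ ∂P = 0 := by
  have h := hXY.integral_bilin hX hY (innerSL ℝ)
  rwa [hY0, map_zero] at h

variable {S : Type*} [MeasurableSpace S] {Z : Ω → S} {s : S → ℝ}

theorem ProbabilityTheory.IndepFun.integral_inner_smul_eq_zero [CompleteSpace E]
    [MeasurableSpace E] [BorelSpace E] {G : S → E} (hZY : IndepFun Z Y P)
    (hG : Measurable G) (hs : Measurable s)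
    (hsG : Integrable (fun ω => s (Z ω) • G (Z ω)) P) (hY : Integrable Y P)
    (hY0 : ∫ ω, Y ω ∂P = 0) :
    ∫ ω, ⟪G (Z ω), s (Z ω) • Y ω⟫ ∂P = 0 := by
  simp_rw [real_inner_smul_right, ← real_inner_smul_left]
  exact (hZY.comp (hs.smul hG) measurable_id).integral_inner_eq_zero hsG hY hY0

end InnerProductSpace

section Gaussian

variable {e : Ω → ℝ} {v : ℝ≥0}

theorem ProbabilityTheory.HasLaw.memLp_of_gaussianReal {μ : ℝ}
    (he : HasLaw e (gaussianReal μ v) P) (p : ℝ≥0) : MemLp e p P := by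
  have h := memLp_id_gaussianReal (μ := μ) (v := v) p
  rw [← he.map_eq] at h
  exact (memLp_map_measure_iff aestronglyMeasurable_id he.aemeasurable).1 h

theorem ProbabilityTheory.HasLaw.integrable_of_gaussianReal {μ : ℝ}
    (he : HasLaw e (gaussianReal μ v) P) : Integrable e P :=
  memLp_one_iff_integrable.1 (by simpa using he.memLp_of_gaussianReal 1)

theorem ProbabilityTheory.HasLaw.integral_eq_of_gaussianReal {μ : ℝ}
    (he : HasLaw e (gaussianReal μ v) P) : ∫ ω, e ω ∂P = μ :=
  he.integral_eq.trans integral_id_gaussianReal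

theorem ProbabilityTheory.HasLaw.integral_sq_of_gaussianReal
    (he : HasLaw e (gaussianReal 0 v) P) : ∫ ω, e ω ^ 2 ∂P = v := by
  rw [← variance_of_integral_eq_zero he.aemeasurable he.integral_eq_of_gaussianReal,
    he.variance_eq, variance_id_gaussianReal]

variable {d : ℕ} {ε ε' : Ω → EuclideanSpace ℝ (Fin d)}

theorem memLp_two_of_forall_hasLaw_gaussianReal (hε : AEMeasurable ε P)
    (hlaw : ∀ j, HasLaw (fun ω => ε ω j) (gaussianReal 0 1) P) : MemLp ε 2 P := by
  rw [memLp_two_iff_integrable_sq_norm hε.aestronglyMeasurable]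
  simp_rw [EuclideanSpace.real_norm_sq_eq]
  exact integrable_finsetSum _ fun j _ => ((hlaw j).memLp_of_gaussianReal 2).integrable_sq

theorem integral_eq_zero_of_forall_hasLaw_gaussianReal [IsProbabilityMeasure P]
    (hε : AEMeasurable ε P) (hlaw : ∀ j, HasLaw (fun ω => ε ω j) (gaussianReal 0 1) P) :
    ∫ ω, ε ω ∂P = 0 := by
  ext j
  have := (EuclideanSpace.proj j).integral_comp_comm
    ((memLp_two_of_forall_hasLaw_gaussianReal hε hlaw).integrable one_le_two)
  simp only [EuclideanSpace.coe_proj] at this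
  rw [← this, (hlaw j).integral_eq_of_gaussianReal]
  rfl

theorem integral_norm_sq_of_forall_hasLaw_gaussianReal
    (hlaw : ∀ j, HasLaw (fun ω => ε ω j) (gaussianReal 0 1) P) : ∫ ω, ‖ε ω‖ ^ 2 ∂P = d := by
  simp_rw [EuclideanSpace.real_norm_sq_eq]
  rw [integral_finsetSum _ fun j _ => ((hlaw j).memLp_of_gaussianReal 2).integrable_sq]
  simp [(hlaw _).integral_sq_of_gaussianReal]

theorem integral_inner_eq_zero_of_forall_hasLaw_gaussianReal
    (hlaw : ∀ j, HasLaw (fun ω => ε ω j) (gaussianReal 0 1) P)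
    (hlaw' : ∀ j, HasLaw (fun ω => ε' ω j) (gaussianReal 0 1) P)
    (hind : ∀ j, IndepFun (fun ω => ε ω j) (fun ω => ε' ω j) P) :
    ∫ ω, ⟪ε ω, ε' ω⟫ ∂P = 0 := by
  have hint : ∀ j, Integrable (fun ω => ε' ω j * ε ω j) P := fun j =>
    (hind j).symm.integrable_mul (hlaw' j).integrable_of_gaussianReal
      (hlaw j).integrable_of_gaussianReal
  simp_rw [PiLp.inner_apply, RCLike.inner_apply, conj_trivial]
  rw [integral_finsetSum _ fun j _ => hint j]
  refine Finset.sum_eq_zero fun j _ => ?_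
  rw [(hind j).symm.integral_fun_mul_eq_mul_integral (hlaw' j).aemeasurable.aestronglyMeasurable
    (hlaw j).aemeasurable.aestronglyMeasurable, (hlaw j).integral_eq_of_gaussianReal, mul_zero]

end Gaussian

section Step

variable {S : Type*} [MeasurableSpace S] {Z : Ω → S} {s s' : S → ℝ} {d : ℕ}
  {ε ε' : Ω → EuclideanSpace ℝ (Fin d)} {K : ℝ}

theorem integral_norm_noise_sq (hZ : AEMeasurable Z P) (hε : AEMeasurable ε P)
    (hε' : AEMeasurable ε' P) (hlaw : ∀ j, HasLaw (fun ω => ε ω j) (gaussianReal 0 1) P)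
    (hlaw' : ∀ j, HasLaw (fun ω => ε' ω j) (gaussianReal 0 1) P)
    (hεε' : ∀ j, IndepFun (fun ω => ε ω j) (fun ω => ε' ω j) P)
    (hind : IndepFun (fun ω => (ε ω, ε' ω)) Z P) (hs : Measurable s) (hs' : Measurable s')
    (hsK : ∀ z, |s z| ≤ K) (hs'K : ∀ z, |s' z| ≤ K) :
    ∫ ω, ‖s' (Z ω) • ε' ω - s (Z ω) • ε ω‖ ^ 2 ∂P
      = d * (∫ ω, s (Z ω) ^ 2 ∂P + ∫ ω, s' (Z ω) ^ 2 ∂P) := by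
  have hsZ : AEStronglyMeasurable (fun ω => s (Z ω)) P :=
    (hs.comp_aemeasurable hZ).aestronglyMeasurable
  have hs'Z : AEStronglyMeasurable (fun ω => s' (Z ω)) P :=
    (hs'.comp_aemeasurable hZ).aestronglyMeasurable
  have hN : MemLp (fun ω => s (Z ω) • ε ω) 2 P :=
    (memLp_two_of_forall_hasLaw_gaussianReal hε hlaw).smul_of_abs_le hsZ fun ω => hsK (Z ω)
  have hN' : MemLp (fun ω => s' (Z ω) • ε' ω) 2 P :=
    (memLp_two_of_forall_hasLaw_gaussianReal hε' hlaw').smul_of_abs_le hs'Z fun ω => hs'K (Z ω)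
  have hsε : IndepFun (fun ω => s (Z ω)) ε P := hind.symm.comp hs measurable_fst
  have hs'ε' : IndepFun (fun ω => s' (Z ω)) ε' P := hind.symm.comp hs' measurable_snd
  have hcross : ∫ ω, ⟪s' (Z ω) • ε' ω, s (Z ω) • ε ω⟫ ∂P = 0 := by
    have hind' : IndepFun (fun ω => s' (Z ω) * s (Z ω)) (fun ω => ⟪ε' ω, ε ω⟫) P :=
      hind.symm.comp (hs'.mul hs) (measurable_snd.inner measurable_fst)
    simp_rw [real_inner_smul_left, real_inner_smul_right, ← mul_assoc]
    rw [hind'.integral_fun_mul_eq_mul_integral (hs'Z.mul hsZ)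
      (hε'.aestronglyMeasurable.inner hε.aestronglyMeasurable),
      integral_inner_eq_zero_of_forall_hasLaw_gaussianReal hlaw' hlaw fun j => (hεε' j).symm,
      mul_zero]
  rw [integral_norm_sub_sq_of_integral_inner_eq_zero hN' hN hcross,
    hs'ε'.integral_norm_smul_sq hs'Z hε'.aestronglyMeasurable,
    hsε.integral_norm_smul_sq hsZ hε.aestronglyMeasurable,
    integral_norm_sq_of_forall_hasLaw_gaussianReal hlaw,
    integral_norm_sq_of_forall_hasLaw_gaussianReal hlaw']
  ring

theorem integral_norm_sub_noise_sq [IsProbabilityMeasure P] {F : S → EuclideanSpace ℝ (Fin d)}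
    (hZ : AEMeasurable Z P) (hF : Measurable F) (hFZ : MemLp (fun ω => F (Z ω)) 2 P)
    (hε : AEMeasurable ε P) (hε' : AEMeasurable ε' P)
    (hlaw : ∀ j, HasLaw (fun ω => ε ω j) (gaussianReal 0 1) P)
    (hlaw' : ∀ j, HasLaw (fun ω => ε' ω j) (gaussianReal 0 1) P)
    (hεε' : ∀ j, IndepFun (fun ω => ε ω j) (fun ω => ε' ω j) P)
    (hind : IndepFun (fun ω => (ε ω, ε' ω)) Z P) (hs : Measurable s) (hs' : Measurable s')
    (hsK : ∀ z, |s z| ≤ K) (hs'K : ∀ z, |s' z| ≤ K) :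
    ∫ ω, ‖F (Z ω) - (s' (Z ω) • ε' ω - s (Z ω) • ε ω)‖ ^ 2 ∂P
      = ∫ ω, ‖F (Z ω)‖ ^ 2 ∂P + d * (∫ ω, s (Z ω) ^ 2 ∂P + ∫ ω, s' (Z ω) ^ 2 ∂P) := by
  have hsZ : AEStronglyMeasurable (fun ω => s (Z ω)) P :=
    (hs.comp_aemeasurable hZ).aestronglyMeasurable
  have hs'Z : AEStronglyMeasurable (fun ω => s' (Z ω)) P :=
    (hs'.comp_aemeasurable hZ).aestronglyMeasurable
  have hN : MemLp (fun ω => s (Z ω) • ε ω) 2 P :=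
    (memLp_two_of_forall_hasLaw_gaussianReal hε hlaw).smul_of_abs_le hsZ fun ω => hsK (Z ω)
  have hN' : MemLp (fun ω => s' (Z ω) • ε' ω) 2 P :=
    (memLp_two_of_forall_hasLaw_gaussianReal hε' hlaw').smul_of_abs_le hs'Z fun ω => hs'K (Z ω)
  have hsF : Integrable (fun ω => s (Z ω) • F (Z ω)) P :=
    (hFZ.smul_of_abs_le hsZ fun ω => hsK (Z ω)).integrable one_le_two
  have hs'F : Integrable (fun ω => s' (Z ω) • F (Z ω)) P :=
    (hFZ.smul_of_abs_le hs'Z fun ω => hs'K (Z ω)).integrable one_le_two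
  have hZε : IndepFun Z ε P := hind.symm.comp measurable_id measurable_fst
  have hZε' : IndepFun Z ε' P := hind.symm.comp measurable_id measurable_snd
  have hcross : ∫ ω, ⟪F (Z ω), s' (Z ω) • ε' ω - s (Z ω) • ε ω⟫ ∂P = 0 := by
    simp_rw [inner_sub_right]
    rw [integral_sub (hFZ.integrable_inner hN') (hFZ.integrable_inner hN),
      hZε'.integral_inner_smul_eq_zero hF hs' hs'F
        ((memLp_two_of_forall_hasLaw_gaussianReal hε' hlaw').integrable one_le_two)
        (integral_eq_zero_of_forall_hasLaw_gaussianReal hε' hlaw'),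
      hZε.integral_inner_smul_eq_zero hF hs hsF
        ((memLp_two_of_forall_hasLaw_gaussianReal hε hlaw).integrable one_le_two)
        (integral_eq_zero_of_forall_hasLaw_gaussianReal hε hlaw), sub_zero]
  rw [integral_norm_sub_sq_of_integral_inner_eq_zero
      (Y := fun ω => s' (Z ω) • ε' ω - s (Z ω) • ε ω) hFZ (hN'.sub hN) hcross,
    integral_norm_noise_sq hZ hε hε' hlaw hlaw' hεε' hind hs hs' hsK hs'K]

end Step

end

theorem stochastic_contraction_step_general {Ω : Type*} [MeasureSpace Ω]
    (P : Measure Ω) [IsProbabilityMeasure P] {d : ℕ}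
    (h : EuclideanSpace ℝ (Fin d) → ℕ → EuclideanSpace ℝ (Fin d))
    (σ : EuclideanSpace ℝ (Fin d) → ℕ → ℝ)
    (t : ℕ) (lam C : ℝ) (hC : 0 ≤ C)
    (hmeash : Measurable fun x => h x t) (hmeasσ : Measurable fun x => σ x t)
    (hcontr : ∀ x y : EuclideanSpace ℝ (Fin d), ‖h x t - h y t‖ ≤ lam * ‖x - y‖)
    (hσ : ∀ x : EuclideanSpace ℝ (Fin d), (σ x t) ^ 2 * d ≤ C)
    (xt xbart : Ω → EuclideanSpace ℝ (Fin d))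
    (hxt : MemLp xt 2 P) (hxbart : MemLp xbart 2 P)
    (εt εt' : Ω → EuclideanSpace ℝ (Fin d))
    (hmeasε : Measurable εt) (hmeasε' : Measurable εt')
    (h_noise_indep : iIndepFun
      (Sum.elim (fun j ω => εt ω j) (fun j ω => εt' ω j) : Fin d ⊕ Fin d → Ω → ℝ) P)
    (h_law : ∀ j : Fin d, Measure.map (fun ω => εt ω j) P = gaussianReal 0 1)
    (h_law' : ∀ j : Fin d, Measure.map (fun ω => εt' ω j) P = gaussianReal 0 1)
    (h_indep_states : IndepFun (fun ω => (εt ω, εt' ω)) (fun ω => (xt ω, xbart ω)) P) :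
    ∫ ω, ‖(h (xt ω) t + σ (xt ω) t • εt ω) -
          (h (xbart ω) t + σ (xbart ω) t • εt' ω)‖ ^ 2 ∂P ≤
      lam ^ 2 * ∫ ω, ‖xt ω - xbart ω‖ ^ 2 ∂P + 2 * C := by
  -- for `d = 0` the hypothesis `hσ` does not bound `σ`, but every vector vanishes
  obtain rfl | hd := d.eq_zero_or_pos
  · simp [Subsingleton.elim _ (0 : EuclideanSpace ℝ (Fin 0))]
    positivity
  have hσK : ∀ x, |σ x t| ≤ √C := fun x => Real.abs_le_sqrt
    ((le_mul_of_one_le_right (sq_nonneg _) (by exact_mod_cast hd)).trans (hσ x))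
  have hσ_noise : ∀ x : Ω → EuclideanSpace ℝ (Fin d), d * ∫ ω, σ (x ω) t ^ 2 ∂P ≤ C := by
    intro x
    rw [mul_comm, ← integral_mul_const]
    exact (integral_mono_of_nonneg (ae_of_all _ fun ω => by positivity) (integrable_const C)
      (ae_of_all _ fun ω => hσ (x ω))).trans_eq (by simp)
  have hA : ∀ ω, ‖h (xt ω) t - h (xbart ω) t‖ ≤ lam * ‖xt ω - xbart ω‖ := fun ω => hcontr _ _
  have hAZ : MemLp (fun ω => h (xt ω) t - h (xbart ω) t) 2 P :=
    (hxt.sub hxbart).of_le_mul (((hmeash.comp_aemeasurable hxt.aemeasurable).sub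
      (hmeash.comp_aemeasurable hxbart.aemeasurable)).aestronglyMeasurable) (ae_of_all _ hA)
  calc _ = ∫ ω, ‖(h (xt ω) t - h (xbart ω) t)
          - (σ (xbart ω) t • εt' ω - σ (xt ω) t • εt ω)‖ ^ 2 ∂P := by
        congr! 4 with ω
        abel
    _ = ∫ ω, ‖h (xt ω) t - h (xbart ω) t‖ ^ 2 ∂P
          + d * (∫ ω, σ (xt ω) t ^ 2 ∂P + ∫ ω, σ (xbart ω) t ^ 2 ∂P) :=
        integral_norm_sub_noise_sq (Z := fun ω => (xt ω, xbart ω))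
          (F := fun p => h p.1 t - h p.2 t) (s := fun p => σ p.1 t) (s' := fun p => σ p.2 t)
          (hxt.aemeasurable.prodMk hxbart.aemeasurable) (by fun_prop) hAZ
          hmeasε.aemeasurable hmeasε'.aemeasurable
          (fun j => ⟨by fun_prop, h_law j⟩) (fun j => ⟨by fun_prop, h_law' j⟩)
          (fun j => h_noise_indep.indepFun (i := .inl j) (j := .inr j) Sum.inl_ne_inr)
          h_indep_states (by fun_prop) (by fun_prop) (fun p => hσK p.1) (fun p => hσK p.2)
    _ ≤ lam ^ 2 * ∫ ω, ‖xt ω - xbart ω‖ ^ 2 ∂P + 2 * C := by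
        have := hσ_noise xt
        have := hσ_noise xbart
        gcongr ?_ + ?_
        · exact integral_norm_sq_le_of_norm_le_mul (hxt.sub hxbart) hA
        · linarith

/-- One-step contraction of a stochastic difference equation: if `h(·,t)` is a
`λ_t`-contraction with `λ_t ∈ [0,1)`, `σ(x,t)²·d ≤ C_t`, and `ε_t, ε_t'` are independent
standard Gaussian vectors `N(0, I_d)` jointly independent of the current states, then for
`x_{t−1} = h(x_t,t) + σ(x_t,t)·ε_t` and `x̄_{t−1} = h(x̄_t,t) + σ(x̄_t,t)·ε_t'` we have
`E[‖x_{t−1} − x̄_{t−1}‖²] ≤ λ_t²·E[‖x_t − x̄_t‖²] + 2·C_t`. -/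
theorem stochastic_contraction_step {Ω : Type*} [MeasureSpace Ω]
    (P : Measure Ω) [IsProbabilityMeasure P] {d : ℕ}
    (h : EuclideanSpace ℝ (Fin d) → ℕ → EuclideanSpace ℝ (Fin d))
    (σ : EuclideanSpace ℝ (Fin d) → ℕ → ℝ)
    (t : ℕ) (lam C : ℝ) (hlam0 : 0 ≤ lam) (hlam1 : lam < 1) (hC : 0 ≤ C)
    (hmeash : Measurable fun x => h x t) (hmeasσ : Measurable fun x => σ x t)
    (hcontr : ∀ x y : EuclideanSpace ℝ (Fin d), ‖h x t - h y t‖ ≤ lam * ‖x - y‖)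
    (hσ : ∀ x : EuclideanSpace ℝ (Fin d), (σ x t) ^ 2 * d ≤ C)
    (xt xbart : Ω → EuclideanSpace ℝ (Fin d))
    (hxt : MemLp xt 2 P) (hxbart : MemLp xbart 2 P)
    (εt εt' : Ω → EuclideanSpace ℝ (Fin d))
    (hmeasε : Measurable εt) (hmeasε' : Measurable εt')
    (h_noise_indep : iIndepFun
      (Sum.elim (fun j ω => εt ω j) (fun j ω => εt' ω j) : Fin d ⊕ Fin d → Ω → ℝ) P)
    (h_law : ∀ j : Fin d, Measure.map (fun ω => εt ω j) P = gaussianReal 0 1)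
    (h_law' : ∀ j : Fin d, Measure.map (fun ω => εt' ω j) P = gaussianReal 0 1)
    (h_indep_states : IndepFun (fun ω => (εt ω, εt' ω)) (fun ω => (xt ω, xbart ω)) P) :
    ∫ ω, ‖(h (xt ω) t + σ (xt ω) t • εt ω) -
          (h (xbart ω) t + σ (xbart ω) t • εt' ω)‖ ^ 2 ∂P ≤
      lam ^ 2 * ∫ ω, ‖xt ω - xbart ω‖ ^ 2 ∂P + 2 * C :=
  stochastic_contraction_step_general P h σ t lam C hC hmeash hmeasσ hcontr hσ xt xbart hxt hxbart
    εt εt' hmeasε hmeasε' h_noise_indep h_law h_law' h_indep_states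
end

section
/- Main denoising theorem: let x ∈ R^d be fixed, δ ∈ R^d, and suppose the recursion e_{t−1} ≤ λ_t²e_t + 2dβ_t holds with initial value e_{t*} ≤ ‖δ‖² + 2d, where ∏_{s=1}^{t*}λ_s² ≤ exp(−t*β_{t*}/2) and 0 < β_1 < ⋯ < β_{t*} < 1. If 2·log((2‖δ‖²+4d)/(μΔ)) ≤ t*β_{t*} ≤ μΔ/(4d) for constants μ > 0, Δ > 0, then e_0 ≤ μΔ; and if additionally E[‖x_0 − x‖²] ≤ Δ with e_0 = E[‖x̄_0 − x_0‖²], then E[‖x̄_0 − x‖²] ≤ 2(μ+1)Δ. -/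
/-!
Unrolling the recursion `e_{t-1} ≤ λ_t² e_t + 2dβ_t` from `t*` down to `0` gives
`e_0 ≤ (∏ λ_s²) e_{t*} + Σ 2dβ_t`. The contraction term is at most
`exp(-t*β_{t*}/2)(‖δ‖² + 2d) ≤ μΔ/2` by the lower bound on `t*β_{t*}`, and the accumulated
noise is at most `2d t* β_{t*} ≤ μΔ/2` by monotonicity of `β` and the upper bound. The bound
on `E‖x̄_0 - x‖²` then follows from `‖a + b‖² ≤ 2‖a‖² + 2‖b‖²`.
-/

open MeasureTheory Finset

theorem le_prod_mul_add_sum_of_le_mul_add {R : Type*} [CommSemiring R] [PartialOrder R]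
    [IsOrderedRing R] {e a b : ℕ → R} {T : ℕ}
    (ha₀ : ∀ t ∈ Icc 1 T, 0 ≤ a t) (ha₁ : ∀ t ∈ Icc 1 T, a t ≤ 1)
    (hb : ∀ t ∈ Icc 1 T, 0 ≤ b t) (hrec : ∀ t ∈ Icc 1 T, e (t - 1) ≤ a t * e t + b t) :
    e 0 ≤ (∏ t ∈ Icc 1 T, a t) * e T + ∑ t ∈ Icc 1 T, b t := by
  induction T with
  | zero => simp
  | succ T ih =>
    have hsub : Icc 1 T ⊆ Icc 1 (T + 1) := Icc_subset_Icc_right T.le_succ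
    have htop : T + 1 ∈ Icc 1 (T + 1) := by simp
    have hprod₀ : 0 ≤ ∏ t ∈ Icc 1 T, a t := prod_nonneg fun t ht ↦ ha₀ t (hsub ht)
    have hprod₁ : ∏ t ∈ Icc 1 T, a t ≤ 1 :=
      prod_le_one (fun t ht ↦ ha₀ t (hsub ht)) fun t ht ↦ ha₁ t (hsub ht)
    rw [prod_Icc_succ_top (by omega), sum_Icc_succ_top (by omega)]
    set A := ∏ t ∈ Icc 1 T, a t
    calc e 0 ≤ A * e T + ∑ t ∈ Icc 1 T, b t :=
          ih (fun t ht ↦ ha₀ t (hsub ht)) (fun t ht ↦ ha₁ t (hsub ht))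
            (fun t ht ↦ hb t (hsub ht)) fun t ht ↦ hrec t (hsub ht)
      _ ≤ A * (a (T + 1) * e (T + 1) + b (T + 1)) + ∑ t ∈ Icc 1 T, b t := by
          gcongr
          exact hrec (T + 1) htop
      _ ≤ A * a (T + 1) * e (T + 1) + (∑ t ∈ Icc 1 T, b t + b (T + 1)) := by
          rw [mul_add, ← mul_assoc, add_assoc, add_comm (A * b _)]
          gcongr
          exact mul_le_of_le_one_left (hb _ htop) hprod₁

theorem sum_Icc_one_le_mul_of_le {f : ℕ → ℝ} {T : ℕ} (hf : ∀ t ∈ Icc 1 T, f t ≤ f T) :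
    ∑ t ∈ Icc 1 T, f t ≤ T * f T := by
  simpa using sum_le_card_nsmul _ _ _ hf

theorem Real.exp_neg_mul_le_of_log_div_le {y c s : ℝ} (hc : 0 < c) (h : Real.log (y / c) ≤ s) :
    Real.exp (-s) * y ≤ c := by
  have : y / c ≤ Real.exp s := (Real.le_exp_log _).trans (Real.exp_le_exp.mpr h)
  rw [Real.exp_neg, inv_mul_le_iff₀ (Real.exp_pos s)]
  rwa [div_le_iff₀ hc] at this

theorem integral_norm_add_sq_le {Ω E : Type*} [MeasurableSpace Ω] {P : Measure Ω}
    [NormedAddCommGroup E] {f g : Ω → E} (hf : MemLp f 2 P) (hg : MemLp g 2 P) :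
    ∫ ω, ‖f ω + g ω‖ ^ 2 ∂P ≤ 2 * ∫ ω, ‖f ω‖ ^ 2 ∂P + 2 * ∫ ω, ‖g ω‖ ^ 2 ∂P := by
  have hf2 := hf.integrable_norm_pow two_ne_zero
  have hg2 := hg.integrable_norm_pow two_ne_zero
  rw [← integral_const_mul, ← integral_const_mul,
    ← integral_add (hf2.const_mul 2) (hg2.const_mul 2)]
  refine integral_mono ((hf.add hg).integrable_norm_pow two_ne_zero)
    ((hf2.const_mul 2).add (hg2.const_mul 2)) fun ω ↦ ?_
  calc ‖f ω + g ω‖ ^ 2 ≤ (‖f ω‖ + ‖g ω‖) ^ 2 := by gcongr; exact norm_add_le _ _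
    _ ≤ 2 * ‖f ω‖ ^ 2 + 2 * ‖g ω‖ ^ 2 := by linarith [add_sq_le (a := ‖f ω‖) (b := ‖g ω‖)]

theorem two_mul_mul_le_half_of_le_div {d u c : ℝ} (hd : 0 ≤ d) (hc : 0 ≤ c)
    (h : u ≤ c / (4 * d)) : 2 * d * u ≤ c / 2 :=
  calc 2 * d * u ≤ 2 * d * (c / (4 * d)) := by gcongr
    -- `d / d ≤ 1` also covers `d = 0`, where `c / (4 * d) = 0`
    _ = c / 2 * (d / d) := by ring
    _ ≤ c / 2 := mul_le_of_le_one_right (by positivity) (div_self_le_one d)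

theorem error_zero_le_of_recursion {d : ℕ} {r μΔ : ℝ} {e lam β : ℕ → ℝ} {T : ℕ}
    (hr : 0 ≤ r) (hμΔ : 0 < μΔ)
    (hlam : ∀ t ∈ Icc 1 T, |lam t| ≤ 1)
    (hβ₀ : ∀ t ∈ Icc 1 T, 0 ≤ β t) (hβle : ∀ t ∈ Icc 1 T, β t ≤ β T)
    (hrec : ∀ t ∈ Icc 1 T, e (t - 1) ≤ lam t ^ 2 * e t + 2 * d * β t)
    (hinit : e T ≤ r + 2 * d)
    (hprod : ∏ s ∈ Icc 1 T, lam s ^ 2 ≤ Real.exp (-(T * β T) / 2))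
    (hlow : 2 * Real.log ((2 * r + 4 * d) / μΔ) ≤ T * β T)
    (hhigh : (T : ℝ) * β T ≤ μΔ / (4 * d)) :
    e 0 ≤ μΔ := by
  have hunroll := le_prod_mul_add_sum_of_le_mul_add (fun t _ ↦ sq_nonneg (lam t))
    (fun t ht ↦ sq_le_one_iff_abs_le_one _ |>.2 (hlam t ht))
    (fun t ht ↦ by have := hβ₀ t ht; positivity) hrec
  have hcontract : (∏ s ∈ Icc 1 T, lam s ^ 2) * e T ≤ μΔ / 2 := by
    have hexp := Real.exp_neg_mul_le_of_log_div_le hμΔ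
      (y := 2 * r + 4 * d) (s := T * β T / 2) (by linarith)
    calc (∏ s ∈ Icc 1 T, lam s ^ 2) * e T
        ≤ (∏ s ∈ Icc 1 T, lam s ^ 2) * (r + 2 * d) :=
          mul_le_mul_of_nonneg_left hinit (prod_nonneg fun s _ ↦ sq_nonneg (lam s))
      _ ≤ Real.exp (-(T * β T) / 2) * (r + 2 * d) := by gcongr
      _ ≤ μΔ / 2 := by rw [neg_div]; linear_combination hexp / 2
  have hnoise : ∑ t ∈ Icc 1 T, 2 * d * β t ≤ μΔ / 2 :=
    calc ∑ t ∈ Icc 1 T, 2 * (d : ℝ) * β t ≤ T * (2 * d * β T) :=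
          sum_Icc_one_le_mul_of_le fun t ht ↦ by gcongr; exact hβle t ht
      _ = 2 * d * (T * β T) := by ring
      _ ≤ μΔ / 2 := two_mul_mul_le_half_of_le_div d.cast_nonneg hμΔ.le hhigh
  linarith

theorem avatar_main_denoising_general {Ω : Type*} [MeasureSpace Ω]
    (P : Measure Ω) [IsProbabilityMeasure P] {d : ℕ}
    (δ x : EuclideanSpace ℝ (Fin d))
    (e lam β : ℕ → ℝ) (tstar : ℕ)
    (hlam : ∀ t, 0 < lam t ∧ lam t < 1)
    (hβpos : ∀ s, 1 ≤ s → s ≤ tstar → 0 < β s)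
    (hβmono : ∀ s t, 1 ≤ s → s < t → t ≤ tstar → β s < β t)
    (hrec : ∀ t ∈ Icc 1 tstar, e (t - 1) ≤ (lam t) ^ 2 * e t + 2 * d * β t)
    (hinit : e tstar ≤ ‖δ‖ ^ 2 + 2 * d)
    (hprod : ∏ s ∈ Icc 1 tstar, (lam s) ^ 2 ≤
      Real.exp (-(tstar * β tstar) / 2))
    (μ Δ : ℝ) (hμ : 0 < μ) (hΔ : 0 < Δ)
    (hlow : 2 * Real.log ((2 * ‖δ‖ ^ 2 + 4 * d) / (μ * Δ)) ≤ tstar * β tstar)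
    (hhigh : (tstar : ℝ) * β tstar ≤ μ * Δ / (4 * d))
    (x0 xbar0 : Ω → EuclideanSpace ℝ (Fin d))
    (hx0 : MemLp x0 2 P) (hxbar0 : MemLp xbar0 2 P)
    (he0 : e 0 = ∫ ω, ‖xbar0 ω - x0 ω‖ ^ 2 ∂P)
    (hx0close : ∫ ω, ‖x0 ω - x‖ ^ 2 ∂P ≤ Δ) :
    e 0 ≤ μ * Δ ∧ ∫ ω, ‖xbar0 ω - x‖ ^ 2 ∂P ≤ 2 * (μ + 1) * Δ := by
  have hβle : ∀ t ∈ Icc 1 tstar, β t ≤ β tstar := fun t ht ↦ by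
    obtain ⟨h1, h2⟩ := mem_Icc.1 ht
    rcases h2.lt_or_eq with h2 | rfl
    exacts [(hβmono t tstar h1 h2 le_rfl).le, le_rfl]
  have he0_le : e 0 ≤ μ * Δ :=
    error_zero_le_of_recursion (sq_nonneg ‖δ‖) (mul_pos hμ hΔ)
      (fun t _ ↦ (abs_of_pos (hlam t).1).trans_le (hlam t).2.le)
      (fun t ht ↦ (hβpos t (mem_Icc.1 ht).1 (mem_Icc.1 ht).2).le) hβle hrec hinit hprod hlow hhigh
  refine ⟨he0_le, ?_⟩
  calc ∫ ω, ‖xbar0 ω - x‖ ^ 2 ∂P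
      = ∫ ω, ‖(xbar0 ω - x0 ω) + (x0 ω - x)‖ ^ 2 ∂P := by simp only [sub_add_sub_cancel]
    _ ≤ 2 * ∫ ω, ‖xbar0 ω - x0 ω‖ ^ 2 ∂P + 2 * ∫ ω, ‖x0 ω - x‖ ^ 2 ∂P :=
        integral_norm_add_sq_le (hxbar0.sub hx0) (hx0.sub (memLp_const x))
    _ ≤ 2 * (μ + 1) * Δ := by rw [← he0]; linarith

/-- Main denoising theorem: under the contraction recursion `e_{t−1} ≤ λ_t²·e_t + 2dβ_t`
with `e_{t*} ≤ ‖δ‖² + 2d`, the product bound `∏_{s=1}^{t*} λ_s² ≤ exp(−t*β_{t*}/2)`, a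
strictly increasing schedule `0 < β_1 < ⋯ < β_{t*} < 1`, and the timestep condition
`2·log((2‖δ‖²+4d)/(μΔ)) ≤ t*β_{t*} ≤ μΔ/(4d)`, we get `e_0 ≤ μΔ`; and if additionally
`e_0 = E[‖x̄_0 − x_0‖²]` and `E[‖x_0 − x‖²] ≤ Δ`, then `E[‖x̄_0 − x‖²] ≤ 2(μ+1)Δ`. -/
theorem avatar_main_denoising {Ω : Type*} [MeasureSpace Ω]
    (P : Measure Ω) [IsProbabilityMeasure P] {d : ℕ} (hd : 1 ≤ d)
    (δ x : EuclideanSpace ℝ (Fin d))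
    (e lam β : ℕ → ℝ) (tstar : ℕ) (htstar : 1 ≤ tstar)
    (he : ∀ t, 0 ≤ e t)
    (hlam : ∀ t, 0 < lam t ∧ lam t < 1)
    (hβpos : ∀ s, 1 ≤ s → s ≤ tstar → 0 < β s)
    (hβlt : ∀ s, 1 ≤ s → s ≤ tstar → β s < 1)
    (hβmono : ∀ s t, 1 ≤ s → s < t → t ≤ tstar → β s < β t)
    (hrec : ∀ t ∈ Icc 1 tstar, e (t - 1) ≤ (lam t) ^ 2 * e t + 2 * d * β t)
    (hinit : e tstar ≤ ‖δ‖ ^ 2 + 2 * d)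
    (hprod : ∏ s ∈ Icc 1 tstar, (lam s) ^ 2 ≤
      Real.exp (-(tstar * β tstar) / 2))
    (μ Δ : ℝ) (hμ : 0 < μ) (hΔ : 0 < Δ)
    (hlow : 2 * Real.log ((2 * ‖δ‖ ^ 2 + 4 * d) / (μ * Δ)) ≤ tstar * β tstar)
    (hhigh : (tstar : ℝ) * β tstar ≤ μ * Δ / (4 * d))
    (x0 xbar0 : Ω → EuclideanSpace ℝ (Fin d))
    (hx0 : MemLp x0 2 P) (hxbar0 : MemLp xbar0 2 P)
    (he0 : e 0 = ∫ ω, ‖xbar0 ω - x0 ω‖ ^ 2 ∂P)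
    (hx0close : ∫ ω, ‖x0 ω - x‖ ^ 2 ∂P ≤ Δ) :
    e 0 ≤ μ * Δ ∧ ∫ ω, ‖xbar0 ω - x‖ ^ 2 ∂P ≤ 2 * (μ + 1) * Δ :=
  avatar_main_denoising_general P δ x e lam β tstar hlam hβpos hβmono hrec hinit hprod μ Δ hμ hΔ
    hlow hhigh x0 xbar0 hx0 hxbar0 he0 hx0close
end
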